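/- arXiv:2310.04092 — 9 statements merged into one kernel-verified Lean document; each statement's English description precedes it below -/
import Mathlib

section
/- For every integer k ≥ 1, the invariant θ_k^{T_k} · δ_k^{D_k} = 2 holds, i.e. the T_k tones and D_k semitones of the k-th family of scales fill exactly one octave. -/
/-- One step of the tone-breaking recursion, acting on `(θ, δ, T, D)`. -/
def musicStep (s : ℚ × ℚ × ℕ × ℕ) : ℚ × ℚ × ℕ × ℕ :=
  if s.1 < s.2.1 ^ 2 then (s.2.1, s.1 / s.2.1, s.2.2.1 + s.2.2.2, s.2.2.1)
  else (s.1 / s.2.1, s.2.1, s.2.2.1, s.2.2.1 + s.2.2.2)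

/-- `music n` is the data `(θ_{n+1}, δ_{n+1}, T_{n+1}, D_{n+1})`. -/
def music : ℕ → ℚ × ℚ × ℕ × ℕ
  | 0 => (3 / 2, 4 / 3, 1, 1)
  | n + 1 => musicStep (music n)

/-- the tone `θ_k` -/
def tone (k : ℕ) : ℚ := (music (k - 1)).1

/-- the semitone `δ_k` -/
def semitone (k : ℕ) : ℚ := (music (k - 1)).2.1

/-- the number of tones `T_k` -/
def numTones (k : ℕ) : ℕ := (music (k - 1)).2.2.1

/-- the number of semitones `D_k` -/
def numSemitones (k : ℕ) : ℕ := (music (k - 1)).2.2.2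

/-- the number of notes `p_k = T_k + D_k` -/
def numNotes (k : ℕ) : ℕ := numTones k + numSemitones k

def octaveProduct (s : ℚ × ℚ × ℕ × ℕ) : ℚ := s.1 ^ s.2.2.1 * s.2.1 ^ s.2.2.2

lemma musicStep_ne_zero {s : ℚ × ℚ × ℕ × ℕ} (hθ : s.1 ≠ 0) (hδ : s.2.1 ≠ 0) :
    (musicStep s).1 ≠ 0 ∧ (musicStep s).2.1 ≠ 0 := by
  unfold musicStep
  split
  · exact ⟨hδ, div_ne_zero hθ hδ⟩
  · exact ⟨div_ne_zero hθ hδ, hδ⟩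

/-- Both moves trade a factor `δ` against a factor `θ / δ`, so the product is unchanged. -/
lemma octaveProduct_musicStep {s : ℚ × ℚ × ℕ × ℕ} (hδ : s.2.1 ≠ 0) :
    octaveProduct (musicStep s) = octaveProduct s := by
  obtain ⟨θ, δ, T, D⟩ := s
  unfold musicStep octaveProduct
  split <;>
  · simp only [div_pow, pow_add]
    field_simp

lemma music_ne_zero (n : ℕ) : (music n).1 ≠ 0 ∧ (music n).2.1 ≠ 0 := by
  induction n with
  | zero => norm_num [music]
  | succ n ih => exact musicStep_ne_zero ih.1 ih.2

lemma octaveProduct_music (n : ℕ) : octaveProduct (music n) = 2 := by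
  induction n with
  | zero => norm_num [music, octaveProduct]
  | succ n ih => rw [music, octaveProduct_musicStep (music_ne_zero n).2, ih]

/-- For every `k ≥ 1`, the `T_k` tones and `D_k` semitones fill exactly one octave:
`θ_k ^ T_k · δ_k ^ D_k = 2`. -/
theorem octave_invariant :
    ∀ k : ℕ, 1 ≤ k →
      tone k ^ numTones k * semitone k ^ numSemitones k = 2 :=
  fun k _ => octaveProduct_music (k - 1)
end

section
/- For every integer k ≥ 1, one has 1 < δ_k < θ_k: the semitone always exceeds 1 and the tone strictly exceeds the semitone. -/
/-! Both moves of the recursion act on the exponent vectors of `θ` and `δ` (with respect to the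
primes 2 and 3) by a unimodular matrix, so the determinant of these two vectors changes at most
by sign; it starts at `-1`. Hence `θ = δ²` never happens, the comparison `θ < δ²` is always
strict, and in either case the new pair again satisfies `1 < δ < θ`. -/

def valDet (p q : ℕ) (x y : ℚ) : ℤ :=
  padicValRat p x * padicValRat q y - padicValRat q x * padicValRat p y

section valDet

variable {p q : ℕ} [Fact p.Prime] [Fact q.Prime] {x y : ℚ}

lemma valDet_div_left (hx : x ≠ 0) (hy : y ≠ 0) : valDet p q (x / y) y = valDet p q x y := by
  simp only [valDet, padicValRat.div hx hy]
  ring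

lemma valDet_div_right (hx : x ≠ 0) (hy : y ≠ 0) : valDet p q y (x / y) = -valDet p q x y := by
  simp only [valDet, padicValRat.div hx hy]
  ring

lemma valDet_sq_left : valDet p q (y ^ 2) y = 0 := by
  simp only [valDet, padicValRat.pow]
  ring

end valDet

lemma valDet_two_three_initial : valDet 2 3 (3 / 2) (4 / 3) = -1 := by
  have : Fact (Nat.Prime 3) := ⟨Nat.prime_three⟩
  have h₂₃ : padicValRat 2 3 = 0 := by
    simpa [padicValNat.eq_zero_of_not_dvd] using padicValRat.of_nat (p := 2) (n := 3)
  have h₃₂ : padicValRat 3 2 = 0 := by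
    simpa [padicValNat.eq_zero_of_not_dvd] using padicValRat.of_nat (p := 3) (n := 2)
  have h₂ : padicValRat 2 2 = 1 := by simpa using padicValRat.self (p := 2) one_lt_two
  have h₃ : padicValRat 3 3 = 1 := by simpa using padicValRat.self (p := 3) (by norm_num)
  have h₂₄ : padicValRat 2 4 = 2 := by
    rw [show (4 : ℚ) = 2 ^ 2 by norm_num, padicValRat.pow, h₂]; rfl
  have h₃₄ : padicValRat 3 4 = 0 := by
    rw [show (4 : ℚ) = 2 ^ 2 by norm_num, padicValRat.pow, h₃₂]; rfl
  norm_num [valDet, padicValRat.div, h₂₃, h₃₂, h₂, h₃, h₂₄, h₃₄]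

def IsTonePair (θ δ : ℚ) : Prop :=
  1 < δ ∧ δ < θ ∧ valDet 2 3 θ δ ≠ 0

lemma isTonePair_initial : IsTonePair (3 / 2) (4 / 3) :=
  ⟨by norm_num, by norm_num, by rw [valDet_two_three_initial]; decide⟩

lemma IsTonePair.ne_sq {θ δ : ℚ} (h : IsTonePair θ δ) : θ ≠ δ ^ 2 := by
  rintro rfl
  exact h.2.2 valDet_sq_left

lemma IsTonePair.musicStep {s : ℚ × ℚ × ℕ × ℕ} (h : IsTonePair s.1 s.2.1) :
    IsTonePair (musicStep s).1 (musicStep s).2.1 := by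
  obtain ⟨hδ, hθ, hdet⟩ := h
  have hδ₀ : 0 < s.2.1 := by linarith
  have hθ₀ : s.1 ≠ 0 := by linarith
  unfold _root_.musicStep
  split_ifs with hsq
  · refine ⟨(one_lt_div hδ₀).2 hθ, (div_lt_iff₀ hδ₀).2 (by nlinarith), ?_⟩
    rwa [valDet_div_right hθ₀ hδ₀.ne', neg_ne_zero]
  · have hsq' : s.2.1 ^ 2 < s.1 :=
      (not_lt.1 hsq).lt_of_ne (IsTonePair.ne_sq ⟨hδ, hθ, hdet⟩).symm
    refine ⟨hδ, (lt_div_iff₀ hδ₀).2 (by nlinarith), ?_⟩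
    rwa [valDet_div_left hθ₀ hδ₀.ne']

lemma isTonePair_music (n : ℕ) : IsTonePair (music n).1 (music n).2.1 := by
  induction n with
  | zero => exact isTonePair_initial
  | succ n ih => exact ih.musicStep

/-- For every `k ≥ 1`, one has `1 < δ_k < θ_k`. -/
theorem one_lt_semitone_lt_tone :
    ∀ k : ℕ, 1 ≤ k → 1 < semitone k ∧ semitone k < tone k := by
  intro k _
  obtain ⟨hδ, hθ, -⟩ := isTonePair_music (k - 1)
  exact ⟨hδ, hθ⟩
end

section
/- (Proposition 1, first part: harmonic equilibrium) For every integer k ≥ 1, the number of tones T_k and the number of semitones D_k are coprime: gcd(T_k, D_k) = 1. -/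
/-- Proposition 1 (first part): for every `k ≥ 1`, `T_k` and `D_k` are coprime. -/
theorem numTones_coprime_numSemitones :
    ∀ k : ℕ, 1 ≤ k → Nat.gcd (numTones k) (numSemitones k) = 1 := by
  have key : ∀ n : ℕ, Nat.gcd (music n).2.2.1 (music n).2.2.2 = 1 := by
    intro n
    induction n with
    | zero => rfl
    | succ m ih =>
      show Nat.gcd (musicStep (music m)).2.2.1 (musicStep (music m)).2.2.2 = 1
      unfold musicStep
      split <;> simp only
      · rw [Nat.gcd_self_add_left, Nat.gcd_comm]; exact ih
      · rw [Nat.gcd_self_add_right]; exact ih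
  intro k _
  exact key (k - 1)
end

section
/- (Proposition 1, second part) For every integer k ≥ 1, the number of tones T_k and the number of notes p_k = T_k + D_k are coprime: gcd(T_k, p_k) = 1. -/
/-- Proposition 1 (second part): for every `k ≥ 1`, `T_k` and `p_k = T_k + D_k` are coprime. -/
theorem numTones_coprime_numNotes :
    ∀ k : ℕ, 1 ≤ k → Nat.gcd (numTones k) (numNotes k) = 1 := by
  intro k _
  have h : ∀ n : ℕ, Nat.gcd (music n).2.2.1 (music n).2.2.2 = 1 := by
    intro n
    induction n with
    | zero => rfl
    | succ m ih =>
      show Nat.gcd (musicStep (music m)).2.2.1 (musicStep (music m)).2.2.2 = 1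
      unfold musicStep
      split
      · dsimp only; rw [Nat.gcd_comm, Nat.gcd_self_add_right]; exact ih
      · dsimp only; rw [Nat.gcd_self_add_right]; exact ih
  have := h (k - 1)
  simp only [numNotes, numTones, numSemitones]
  rw [Nat.gcd_comm, Nat.gcd_self_add_left]
  rw [Nat.gcd_comm]; exact this
end

section
/- (Proposition 2: factorisation of the multiplicative structure) For every integer k ≥ 1, the number N_k = C(p_k, T_k) of scales with p_k notes and T_k tones is divisible by p_k: there exists a natural number τ_k with C(p_k, T_k) = p_k · τ_k. -/
lemma music_inv (n : ℕ) : Nat.Coprime (music n).2.2.1 (music n).2.2.2 ∧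
    0 < (music n).2.2.1 ∧ 0 < (music n).2.2.2 := by
  induction n with
  | zero => simp [music, Nat.Coprime]
  | succ n ih =>
    obtain ⟨hc, hT, hD⟩ := ih
    simp only [music, musicStep]
    split <;> simp only
    · exact ⟨by simpa [Nat.Coprime, Nat.add_comm, Nat.gcd_comm] using
        (Nat.coprime_add_self_left.mpr hc.symm), by omega, hT⟩
    · exact ⟨by simpa [Nat.Coprime] using (Nat.coprime_add_self_right.mpr hc), hT, by omega⟩

/-- Proposition 2: the number `N_k = C(p_k, T_k)` of scales with `p_k` notes and
`T_k` tones is divisible by `p_k`. -/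
theorem numNotes_dvd_choose :
    ∀ k : ℕ, 1 ≤ k →
      ∃ τ : ℕ, Nat.choose (numNotes k) (numTones k) = numNotes k * τ := by
  intro k _
  obtain ⟨hc, hT, hD⟩ := music_inv (k - 1)
  set T := (music (k-1)).2.2.1 with hTdef
  set D := (music (k-1)).2.2.2 with hDdef
  have hnT : numTones k = T := rfl
  have hnN : numNotes k = T + D := rfl
  rw [hnN, hnT]
  have hcop : Nat.Coprime (T + D) T := by
    simpa [Nat.Coprime, Nat.gcd_comm] using Nat.coprime_add_self_left.mpr hc.symm
  have hp : T + D = (T + D - 1) + 1 := by omega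
  have hT1 : T = (T - 1) + 1 := by omega
  have key : (T + D) * Nat.choose (T + D - 1) (T - 1)
      = Nat.choose (T + D) T * T := by
    rw [hp, hT1]; exact Nat.add_one_mul_choose_eq _ _
  have hdvd : (T + D) ∣ Nat.choose (T + D) T * T := ⟨_, key.symm⟩
  have := (Nat.Coprime.dvd_of_dvd_mul_right hcop hdvd)
  exact this
end

section
/- (Key lemma (7.23) for Proposition 3) Let ε ∈ {−1, +1} and let T, D be positive integers. If ξ_{−εT} < ξ_{εD}, then ℓ(εD) − ℓ(−εT) = ℓ(ε(T + D)). -/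
/-- `ℓ(k) = ⌊k · (log 3)/(log 2)⌋`. -/
noncomputable def ell (k : ℤ) : ℤ := ⌊(k : ℝ) * (Real.log 3 / Real.log 2)⌋

/-- `ξ_k = 3^k / 2^{ℓ(k)}`, as a rational number (integer exponents). -/
noncomputable def xi (k : ℤ) : ℚ := 3 ^ k / 2 ^ ell k

/-!
Since `3 = 2 ^ α` with `α = log 3 / log 2`, we have `ξ_k = 2 ^ fract (k α)`. Hence `ξ_n < ξ_m`
says `fract (n α) < fract (m α)`, so no borrow occurs when subtracting `n α` from `m α` and
`⌊(m - n) α⌋ = ⌊m α⌋ - ⌊n α⌋`. Take `m = εD` and `n = -εT`.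
-/

theorem Int.floor_sub_eq_of_fract_lt {R : Type*} [Ring R] [LinearOrder R] [IsStrictOrderedRing R]
    [FloorRing R] {a b : R} (h : fract b < fract a) : ⌊a - b⌋ = ⌊a⌋ - ⌊b⌋ := by
  have hsplit : a - b = ((⌊a⌋ - ⌊b⌋ : ℤ) : R) + (fract a - fract b) := by
    rw [Int.cast_sub, fract, fract]; abel
  have hsmall : fract a - fract b < 1 :=
    (sub_le_self _ (fract_nonneg b)).trans_lt (fract_lt_one a)
  rw [hsplit, floor_intCast_add, floor_eq_zero_iff.mpr ⟨sub_nonneg.mpr h.le, hsmall⟩, add_zero]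

open Real in
theorem xi_eq_two_rpow_fract (k : ℤ) : (xi k : ℝ) = 2 ^ Int.fract (k * (log 3 / log 2)) := by
  rw [Int.fract, ← ell, rpow_sub two_pos, rpow_intCast, mul_comm, rpow_mul zero_le_two,
    log_div_log, rpow_logb two_pos (by norm_num) three_pos, rpow_intCast, xi]
  push_cast
  rfl

theorem xi_lt_xi_iff {m n : ℤ} :
    xi n < xi m ↔ Int.fract ((n : ℝ) * (Real.log 3 / Real.log 2)) <
      Int.fract ((m : ℝ) * (Real.log 3 / Real.log 2)) := by
  rw [← Rat.cast_lt (K := ℝ), xi_eq_two_rpow_fract, xi_eq_two_rpow_fract,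
    Real.rpow_lt_rpow_left_iff one_lt_two]

theorem ell_sub_of_xi_lt {m n : ℤ} (h : xi n < xi m) : ell (m - n) = ell m - ell n := by
  rw [ell, Int.cast_sub, sub_mul]
  exact Int.floor_sub_eq_of_fract_lt (xi_lt_xi_iff.mp h)

theorem ell_add_of_xi_lt_general (ε : ℤ) (T D : ℕ)
    (h : xi (-(ε * (T : ℤ))) < xi (ε * (D : ℤ))) :
    ell (ε * (D : ℤ)) - ell (-(ε * (T : ℤ))) = ell (ε * ((T : ℤ) + (D : ℤ))) := by
  rw [← ell_sub_of_xi_lt h, sub_neg_eq_add, mul_add, add_comm]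

/-- Key lemma (7.23) for Proposition 3: if `ε ∈ {−1, +1}`, `T, D > 0` and
`ξ_{−εT} < ξ_{εD}`, then `ℓ(εD) − ℓ(−εT) = ℓ(ε(T + D))`. -/
theorem ell_add_of_xi_lt (ε : ℤ) (hε : ε = 1 ∨ ε = -1) (T D : ℕ)
    (hT : 0 < T) (hD : 0 < D)
    (h : xi (-(ε * (T : ℤ))) < xi (ε * (D : ℤ))) :
    ell (ε * (D : ℤ)) - ell (-(ε * (T : ℤ))) = ell (ε * ((T : ℤ) + (D : ℤ))) :=
  ell_add_of_xi_lt_general ε T D h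
end

section
/- (Proposition 3: notes of a scale and index shift) For every integer k ≥ 1 there exists a sign ε_k ∈ {−1, +1} such that θ_k = ξ_{ε_k · D_k} and δ_k = ξ_{−ε_k · T_k}: the tone corresponds, in the family of all notes, to an index shift equal (up to sign) to the number of semitones, and the semitone to an index shift equal (up to sign) to the number of tones. -/
lemma log2_pos : (0:ℝ) < Real.log 2 := Real.log_pos (by norm_num)

lemma ell_eq (c d : ℤ) (h1 : (2:ℚ)^d ≤ 3^c) (h2 : (3:ℚ)^c < 2^(d+1)) : ell c = d := by
  have h1' : (2:ℝ)^d ≤ 3^c := by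
    have := (Rat.cast_le (K:=ℝ)).mpr h1; push_cast at this; exact this
  have h2' : (3:ℝ)^c < 2^(d+1) := by
    have := (Rat.cast_lt (K:=ℝ)).mpr h2; push_cast at this; exact this
  have l1 := Real.log_le_log (by positivity) h1'
  have l2 := Real.log_lt_log (by positivity) h2'
  rw [Real.log_zpow, Real.log_zpow] at l1 l2
  unfold ell
  rw [Int.floor_eq_iff]
  constructor
  · rw [mul_div_assoc', le_div_iff₀ log2_pos]
    linarith
  · rw [mul_div_assoc', div_lt_iff₀ log2_pos]
    push_cast at l2 ⊢
    linarith

lemma xi_bounds (m : ℤ) : (1:ℚ) ≤ xi m ∧ xi m < 2 := by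
  have hfl : ((ell m : ℝ)) ≤ (m:ℝ) * (Real.log 3 / Real.log 2) := Int.floor_le _
  have hfu : (m:ℝ) * (Real.log 3 / Real.log 2) < (ell m : ℝ) + 1 := Int.lt_floor_add_one _
  rw [mul_div_assoc'] at hfl hfu
  have h1 : (2:ℝ)^(ell m) ≤ 3^m := by
    rw [← Real.log_le_log_iff (by positivity) (by positivity), Real.log_zpow, Real.log_zpow]
    rw [le_div_iff₀ log2_pos] at hfl
    exact hfl
  have h2 : (3:ℝ)^m < 2^(ell m + 1) := by
    rw [← Real.log_lt_log_iff (by positivity) (by positivity), Real.log_zpow, Real.log_zpow]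
    rw [div_lt_iff₀ log2_pos] at hfu
    push_cast
    linarith
  have h1q : (2:ℚ)^(ell m) ≤ 3^m := by
    rw [← Rat.cast_le (K:=ℝ)]; push_cast; exact h1
  have h2q : (3:ℚ)^m < 2^(ell m + 1) := by
    rw [← Rat.cast_lt (K:=ℝ)]; push_cast at h2 ⊢; exact_mod_cast h2
  have p2 : (0:ℚ) < 2^(ell m) := by positivity
  constructor
  · rw [xi, le_div_iff₀ p2, one_mul]; exact h1q
  · rw [xi, div_lt_iff₀ p2]
    calc (3:ℚ)^m < 2^(ell m + 1) := h2q
    _ = 2 * 2^(ell m) := by rw [zpow_add₀ (by norm_num : (2:ℚ) ≠ 0)]; ring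

lemma pow_ne_nat (a b : ℕ) (hb : 1 ≤ b) : (3:ℕ)^a ≠ 2^b := by
  intro h
  have h1 : Odd ((3:ℕ)^a) := Odd.pow (by decide)
  have h2 : ¬ Odd ((2:ℕ)^b) := by
    simp [Nat.even_pow, Nat.not_odd_iff_even]
    omega
  rw [h] at h1; exact h2 h1

lemma zpow_eq_aux (c d : ℤ) (hc : 0 < c) (h : (3:ℚ)^c = 2^d) : False := by
  have h3 : (1:ℚ) < 3^c := one_lt_zpow₀ (by norm_num) (by omega)
  have hd : 0 < d := by
    by_contra hd
    push_neg at hd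
    have : (2:ℚ)^d ≤ 1 := zpow_le_one_of_nonpos₀ (by norm_num) hd
    rw [h] at h3; linarith
  have hc' : (3:ℚ)^c = (3:ℚ)^(c.toNat) := by rw [← zpow_natCast]; congr 1; omega
  have hd' : (2:ℚ)^d = (2:ℚ)^(d.toNat) := by rw [← zpow_natCast]; congr 1; omega
  rw [hc', hd'] at h
  have : ((3^c.toNat : ℕ) : ℚ) = ((2^d.toNat : ℕ) : ℚ) := by push_cast; exact h
  have := Nat.cast_injective this
  exact pow_ne_nat _ _ (by omega) this

lemma three_zpow_ne_two_zpow (c d : ℤ) (hc : c ≠ 0) : (3:ℚ)^c ≠ 2^d := by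
  intro h
  rcases lt_or_gt_of_ne hc with h1 | h1
  · have : (3:ℚ)^(-c) = 2^(-d) := by
      rw [zpow_neg, zpow_neg, h]
    exact zpow_eq_aux (-c) (-d) (by omega) this
  · exact zpow_eq_aux c d h1 h

lemma xi_div (a b : ℤ) : xi a / xi b = 3^(a-b) / 2^(ell a - ell b) := by
  unfold xi
  rw [div_div_div_comm, ← zpow_sub₀ (by norm_num : (3:ℚ) ≠ 0),
    ← zpow_sub₀ (by norm_num : (2:ℚ) ≠ 0)]

lemma xi_of_bounds (c d : ℤ) (h1 : (1:ℚ) ≤ 3^c/2^d) (h2 : (3:ℚ)^c/2^d < 2) :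
    (3:ℚ)^c/2^d = xi c := by
  have p2 : (0:ℚ) < 2^d := by positivity
  have e : ell c = d := by
    apply ell_eq
    · rw [le_div_iff₀ p2, one_mul] at h1; exact h1
    · rw [div_lt_iff₀ p2] at h2
      calc (3:ℚ)^c < 2 * 2^d := h2
      _ = 2^(d+1) := by rw [zpow_add₀ (by norm_num : (2:ℚ) ≠ 0)]; ring
  rw [xi, e]

lemma xi_div_eq (a b : ℤ) (h1 : (1:ℚ) ≤ xi a / xi b) (h2 : xi a / xi b < 2) :
    xi a / xi b = xi (a - b) := by
  rw [xi_div] at h1 h2 ⊢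
  exact xi_of_bounds _ _ h1 h2

lemma xi_sq_ne (a b : ℤ) (h : a ≠ 2*b) : xi a ≠ xi b ^ 2 := by
  intro he
  unfold xi at he
  rw [div_pow, ← zpow_natCast ((3:ℚ)^b), ← zpow_natCast ((2:ℚ)^(ell b)), ← zpow_mul, ← zpow_mul] at he
  have p1 : ((2:ℚ)^(ell a)) ≠ 0 := by positivity
  have p2 : ((2:ℚ)^(ell b * (2:ℕ))) ≠ 0 := by positivity
  rw [div_eq_div_iff p1 p2] at he
  have : (3:ℚ)^(a - b*2) = 2^(ell a - ell b * 2) := by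
    rw [zpow_sub₀ (by norm_num : (3:ℚ) ≠ 0), zpow_sub₀ (by norm_num : (2:ℚ) ≠ 0)]
    rw [div_eq_div_iff (by positivity) (by positivity)]
    push_cast at he
    linear_combination he
  exact three_zpow_ne_two_zpow _ _ (by omega) this

lemma music_inv_s11 (n : ℕ) : ∃ ε : ℤ, (ε = 1 ∨ ε = -1) ∧
    (music n).1 = xi (ε * ((music n).2.2.2 : ℤ)) ∧
    (music n).2.1 = xi (-(ε * ((music n).2.2.1 : ℤ))) ∧
    1 ≤ (music n).2.2.1 ∧ 1 ≤ (music n).2.2.2 ∧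
    1 < (music n).2.1 ∧ (music n).2.1 < (music n).1 := by
  induction n with
  | zero =>
    refine ⟨1, Or.inl rfl, ?_, ?_, ?_, ?_, ?_, ?_⟩
    · show (3/2 : ℚ) = xi (1 * (1:ℤ))
      have e : ell 1 = 1 := ell_eq 1 1 (by norm_num) (by norm_num)
      norm_num [xi, e]
    · show (4/3 : ℚ) = xi (-(1 * (1:ℤ)))
      have e : ell (-1) = -2 := ell_eq (-1) (-2) (by norm_num) (by norm_num)
      norm_num [xi, e]
    · exact le_refl 1
    · exact le_refl 1
    · norm_num [music]
    · norm_num [music]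
  | succ n ih =>
    obtain ⟨ε, hε, hθ, hδ, hT, hD, h1, h2⟩ := ih
    set θ := (music n).1 with hθdef
    set δ := (music n).2.1 with hδdef
    set T := (music n).2.2.1 with hTdef
    set D := (music n).2.2.2 with hDdef
    have hδ0 : (0:ℚ) < δ := by linarith
    have hθ2 : θ < 2 := by rw [hθ]; exact (xi_bounds _).2
    have hδ2 : δ < 2 := by rw [hδ]; exact (xi_bounds _).2
    have hm : music (n+1) = musicStep (music n) := rfl
    by_cases hc : θ < δ^2
    · have hstep : music (n+1) = (δ, θ/δ, T+D, T) := by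
        rw [hm, musicStep, if_pos]
        exact hc
      rw [hstep]
      have hdd : θ/δ < δ := by
        rw [div_lt_iff₀ hδ0]
        nlinarith
      have key : θ/δ = xi (ε*(D:ℤ) - -(ε*(T:ℤ))) := by
        rw [hθ, hδ]
        apply xi_div_eq
        · rw [← hθ, ← hδ, one_le_div hδ0]; exact h2.le
        · rw [← hθ, ← hδ]; linarith
      refine ⟨-ε, by rcases hε with h|h <;> simp [h], ?_, ?_, ?_, ?_, ?_, ?_⟩
      · show δ = xi (-ε * ((T:ℕ):ℤ))
        rw [hδ]; congr 1; ring
      · show θ/δ = xi (-(-ε * (((T+D:ℕ)):ℤ)))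
        rw [key]; congr 1; push_cast; ring
      · show 1 ≤ T + D; omega
      · show 1 ≤ T; omega
      · show 1 < θ/δ
        rw [one_lt_div hδ0]; exact h2
      · exact hdd
    · push_neg at hc
      have hstep : music (n+1) = (θ/δ, δ, T, T+D) := by
        rw [hm, musicStep, if_neg]
        push_neg
        exact hc
      rw [hstep]
      have hne : θ ≠ δ^2 := by
        rw [hθ, hδ]
        apply xi_sq_ne
        rcases hε with h|h <;> (subst h; omega)
      have hlt : δ^2 < θ := lt_of_le_of_ne hc (Ne.symm hne)
      have key : θ/δ = xi (ε*(D:ℤ) - -(ε*(T:ℤ))) := by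
        rw [hθ, hδ]
        apply xi_div_eq
        · rw [← hθ, ← hδ, one_le_div hδ0]; exact h2.le
        · rw [← hθ, ← hδ, div_lt_iff₀ hδ0]; nlinarith
      refine ⟨ε, hε, ?_, ?_, ?_, ?_, ?_, ?_⟩
      · show θ/δ = xi (ε * (((T+D:ℕ)):ℤ))
        rw [key]; congr 1; push_cast; ring
      · show δ = xi (-(ε * ((T:ℕ):ℤ)))
        exact hδ
      · exact hT
      · show 1 ≤ T + D; omega
      · exact h1
      · show δ < θ/δ
        rw [lt_div_iff₀ hδ0]; nlinarith

/-- Proposition 3: for every `k ≥ 1` there is a sign `ε_k ∈ {−1, +1}` with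
`θ_k = ξ_{ε_k · D_k}` and `δ_k = ξ_{−ε_k · T_k}`. -/
theorem tone_semitone_eq_xi :
    ∀ k : ℕ, 1 ≤ k → ∃ ε : ℤ, (ε = 1 ∨ ε = -1) ∧
      tone k = xi (ε * (numSemitones k : ℤ)) ∧
      semitone k = xi (-(ε * (numTones k : ℤ))) := by
  intro k _
  obtain ⟨ε, hε, hθ, hδ, _⟩ := music_inv_s11 (k - 1)
  exact ⟨ε, hε, hθ, hδ⟩
end

section
/- (Proposition 3, explicit form of the sign) Define ε_1 = 1 and, for k ≥ 1, ε_{k+1} = −ε_k if θ_k < δ_k^2 and ε_{k+1} = ε_k otherwise. Then for every k ≥ 1, θ_k = ξ_{ε_k · D_k} and δ_k = ξ_{−ε_k · T_k}. -/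
/-- `epsSeq n` is the sign `ε_{n+1}`: `ε_1 = 1`, and `ε_{k+1} = −ε_k` if `θ_k < δ_k²`,
`ε_{k+1} = ε_k` otherwise. -/
def epsSeq : ℕ → ℤ
  | 0 => 1
  | n + 1 => if (music n).1 < (music n).2.1 ^ 2 then -epsSeq n else epsSeq n

/-- the sign `ε_k` -/
def eps (k : ℕ) : ℤ := epsSeq (k - 1)

lemma div_zpow_div (a b c d : ℤ) :
    ((3:ℚ)^a/2^b) / ((3:ℚ)^c/2^d) = 3^(a-c)/2^(b-d) := by
  rw [div_div_div_comm, ← zpow_sub₀ (by norm_num : (3:ℚ) ≠ 0),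
    ← zpow_sub₀ (by norm_num : (2:ℚ) ≠ 0)]


lemma xi_eq_of (a b : ℤ) (h1 : (1:ℚ) ≤ 3^a/2^b) (h2 : (3:ℚ)^a/2^b < 2) :
    xi a = 3^a/2^b := by
  have h2pos : (0:ℚ) < 2^b := by positivity
  have hq1 : (2:ℚ)^b ≤ 3^a := (one_le_div h2pos).mp h1
  have hq2 : (3:ℚ)^a < 2 * 2^b := (div_lt_iff₀ h2pos).mp h2
  have hr1 : (2:ℝ)^b ≤ 3^a := by
    have := (Rat.cast_le (K := ℝ)).mpr hq1; push_cast at this; exact this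
  have hr2 : (3:ℝ)^a < 2 * 2^b := by
    have := (Rat.cast_lt (K := ℝ)).mpr hq2; push_cast at this; exact this
  have hlog2 : 0 < Real.log 2 := Real.log_pos (by norm_num)
  have hl1 : (b:ℝ) * Real.log 2 ≤ a * Real.log 3 := by
    have := Real.log_le_log (by positivity) hr1
    rwa [Real.log_zpow, Real.log_zpow] at this
  have hl2 : (a:ℝ) * Real.log 3 < ((b:ℝ) + 1) * Real.log 2 := by
    have := Real.log_lt_log (by positivity) hr2
    rw [Real.log_zpow, Real.log_mul (by norm_num) (by positivity),
      Real.log_zpow] at this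
    rw [add_mul, one_mul]
    linarith
  have hb : ell a = b := by
    unfold ell
    rw [Int.floor_eq_iff]
    constructor
    · rw [mul_div_assoc', le_div_iff₀ hlog2]; exact hl1
    · rw [mul_div_assoc', div_lt_iff₀ hlog2]; exact_mod_cast hl2
  unfold xi; rw [hb]

lemma music_key : ∀ n : ℕ, ∃ b d : ℤ,
    (music n).1 = 3 ^ (epsSeq n * ((music n).2.2.2 : ℤ)) / 2 ^ b ∧
    (music n).2.1 = 3 ^ (-(epsSeq n * ((music n).2.2.1 : ℤ))) / 2 ^ d ∧
    1 ≤ (music n).2.1 ∧ (music n).2.1 ≤ (music n).1 ∧ (music n).1 < 2 := by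
  intro n
  induction n with
  | zero =>
    refine ⟨1, -2, ?_, ?_, ?_, ?_, ?_⟩ <;> simp [music, epsSeq] <;> norm_num
  | succ n ih =>
    obtain ⟨b, d, h1, h2, h3, h4, h5⟩ := ih
    have hδpos : (0:ℚ) < (music n).2.1 := by linarith
    have hθpos : (0:ℚ) < (music n).1 := by linarith
    by_cases hc : (music n).1 < (music n).2.1 ^ 2
    · have hm : music (n + 1) = ((music n).2.1, (music n).1 / (music n).2.1,
        (music n).2.2.1 + (music n).2.2.2, (music n).2.2.1) := by
        simp [music, musicStep, hc]
      have he : epsSeq (n + 1) = -epsSeq n := by simp [epsSeq, hc]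
      refine ⟨d, b - d, ?_, ?_, ?_, ?_, ?_⟩ <;> rw [hm] <;> (try rw [he]) <;> dsimp only
      · rw [neg_mul]; exact h2
      · have hx : epsSeq n * ((music n).2.2.2 : ℤ) - -(epsSeq n * ((music n).2.2.1 : ℤ))
            = -(-epsSeq n * (((music n).2.2.1 + (music n).2.2.2 : ℕ) : ℤ)) := by
          push_cast; ring
        rw [h1, h2, div_zpow_div, hx]
      · rw [one_le_div₀ hδpos]; exact h4
      · rw [div_le_iff₀ hδpos]; nlinarith
      · linarith
    · have hm : music (n + 1) = ((music n).1 / (music n).2.1, (music n).2.1,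
        (music n).2.2.1, (music n).2.2.1 + (music n).2.2.2) := by
        simp [music, musicStep, hc]
      have he : epsSeq (n + 1) = epsSeq n := by simp [epsSeq, hc]
      push_neg at hc
      refine ⟨b - d, d, ?_, ?_, ?_, ?_, ?_⟩ <;> rw [hm] <;> (try rw [he]) <;> dsimp only
      · have hx : epsSeq n * ((music n).2.2.2 : ℤ) - -(epsSeq n * ((music n).2.2.1 : ℤ))
            = epsSeq n * (((music n).2.2.1 + (music n).2.2.2 : ℕ) : ℤ) := by
          push_cast; ring
        rw [h1, h2, div_zpow_div, hx]
      · exact h2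
      · exact h3
      · rw [le_div_iff₀ hδpos]; nlinarith
      · have hle : (music n).1 / (music n).2.1 ≤ (music n).1 := by
          rw [div_le_iff₀ hδpos]; nlinarith
        linarith

/-- Proposition 3 with the explicit sign: for every `k ≥ 1`,
`θ_k = ξ_{ε_k · D_k}` and `δ_k = ξ_{−ε_k · T_k}`. -/
theorem tone_semitone_eq_xi_explicit :
    ∀ k : ℕ, 1 ≤ k →
      tone k = xi (eps k * (numSemitones k : ℤ)) ∧
      semitone k = xi (-(eps k * (numTones k : ℤ))) := by
  intro k hk
  obtain ⟨b, d, h1, h2, h3, h4, h5⟩ := music_key (k - 1)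
  constructor
  · show (music (k-1)).1 = xi (epsSeq (k-1) * ((music (k-1)).2.2.2 : ℤ))
    rw [h1]
    exact (xi_eq_of _ b (h1 ▸ (h3.trans h4)) (h1 ▸ h5)).symm
  · show (music (k-1)).2.1 = xi (-(epsSeq (k-1) * ((music (k-1)).2.2.1 : ℤ)))
    rw [h2]
    exact (xi_eq_of _ d (h2 ▸ h3) (h2 ▸ (lt_of_le_of_lt h4 h5))).symm
end

section
/- The numbers of notes of the first ten families of scales produced by the tone-breaking recursion are (p_1, p_2, p_3, p_4, p_5, p_6, p_7, p_8, p_9, p_10) = (2, 3, 5, 7, 12, 17, 29, 41, 53, 94); in particular this sequence differs from the Fibonacci sequence from p_4 on. -/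
lemma m1 : music 1 = (4/3, 9/8, 2, 1) := by norm_num [music, musicStep]

lemma m2 : music 2 = (32/27, 9/8, 2, 3) := by
  show musicStep (music 1) = _; rw [m1]; norm_num [musicStep]

lemma m3 : music 3 = (9/8, 256/243, 5, 2) := by
  show musicStep (music 2) = _; rw [m2]; norm_num [musicStep]

lemma m4 : music 4 = (2187/2048, 256/243, 5, 7) := by
  show musicStep (music 3) = _; rw [m3]; norm_num [musicStep]

lemma m5 : music 5 = (256/243, 531441/524288, 12, 5) := by
  show musicStep (music 4) = _; rw [m4]; norm_num [musicStep]

lemma m6 : music 6 = (134217728/129140163, 531441/524288, 12, 17) := by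
  show musicStep (music 5) = _; rw [m5]; norm_num [musicStep]

lemma m7 : music 7 = (70368744177664/68630377364883, 531441/524288, 12, 29) := by
  show musicStep (music 6) = _; rw [m6]; norm_num [musicStep]

lemma m8 : music 8 = (531441/524288, 36893488147419103232/36472996377170786403, 41, 12) := by
  show musicStep (music 7) = _; rw [m7]; norm_num [musicStep]

lemma m9 : music 9 = (36893488147419103232/36472996377170786403, 19383245667680019896796723/19342813113834066795298816, 53, 41) := by
  show musicStep (music 8) = _; rw [m8]; norm_num [musicStep]


/-- The numbers of notes of the first ten families are
`2, 3, 5, 7, 12, 17, 29, 41, 53, 94`; this sequence agrees with the Fibonacci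
sequence `p_k = Fib(k+2)` for `k ≤ 3` but differs from it from `p_4` on. -/
theorem numNotes_first_ten :
    numNotes 1 = 2 ∧ numNotes 2 = 3 ∧ numNotes 3 = 5 ∧ numNotes 4 = 7 ∧
      numNotes 5 = 12 ∧ numNotes 6 = 17 ∧ numNotes 7 = 29 ∧ numNotes 8 = 41 ∧
      numNotes 9 = 53 ∧ numNotes 10 = 94 ∧
      (∀ k : ℕ, 4 ≤ k → k ≤ 10 → numNotes k ≠ Nat.fib (k + 2)) := by
  have h : ∀ k, 1 ≤ k → k ≤ 10 → numNotes k = [0,2,3,5,7,12,17,29,41,53,94].getD k 0 := by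
    intro k h1 h2
    interval_cases k <;>
      simp [numNotes, numTones, numSemitones, m1, m2, m3, m4, m5, m6, m7, m8, m9] <;> rfl
  refine ⟨h 1 (by norm_num) (by norm_num), h 2 (by norm_num) (by norm_num),
    h 3 (by norm_num) (by norm_num), h 4 (by norm_num) (by norm_num),
    h 5 (by norm_num) (by norm_num), h 6 (by norm_num) (by norm_num),
    h 7 (by norm_num) (by norm_num), h 8 (by norm_num) (by norm_num),
    h 9 (by norm_num) (by norm_num), h 10 (by norm_num) (by norm_num), ?_⟩
  intro k h4 h10
  rw [h k (by omega) h10]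
  interval_cases k <;> simp [Nat.fib] <;> decide
end
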